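/- arXiv:2202.12664 — 3 statements merged into one kernel-verified Lean document; each statement's English description precedes it below -/
import Mathlib

section
/- Let X be a finite set, U a finite family of distinct subsets of X, and ρ : U → U a bijection. Then there exists a permutation σ of X such that ρ(B) = σ(B) (the image of B under σ) for every B ∈ U, if and only if the cardinality Venn diagrams of U and of ρ(U) are equal, i.e., ℓ_{U,U₁} = ℓ_{U,ρ(U₁)} for every nonempty subfamily U₁ ⊆ U (where ρ applied to a subfamily means its elementwise image). -/
/-- The Venn cell `L_{U,U₁} = (⋂_{A ∈ U₁} A) \ (⋃_{B ∈ U \ U₁} B)`. -/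
def vennCell {X : Type*} [Fintype X] [DecidableEq X]
    (U U₁ : Finset (Finset X)) : Finset X :=
  (U₁.inf id) \ ((U \ U₁).sup id)

/-- The cardinality `ℓ_{U,U₁}` of the Venn cell. -/
def vennCard {X : Type*} [Fintype X] [DecidableEq X]
    (U U₁ : Finset (Finset X)) : ℕ :=
  (vennCell U U₁).card

lemma mem_vennCell_iff {X : Type*} [Fintype X] [DecidableEq X]
    {U U₁ : Finset (Finset X)} (h : U₁ ⊆ U) (x : X) :
    x ∈ vennCell U U₁ ↔ U.filter (fun A => x ∈ A) = U₁ := by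
  simp only [vennCell, Finset.mem_sdiff, Finset.mem_inf, Finset.mem_sup, id]
  constructor
  · rintro ⟨h1, h2⟩
    ext A
    simp only [Finset.mem_filter]
    constructor
    · rintro ⟨hA, hx⟩
      by_contra hA1
      exact h2 ⟨A, ⟨hA, hA1⟩, hx⟩
    · intro hA1
      exact ⟨h hA1, h1 A hA1⟩
  · rintro rfl
    refine ⟨fun A hA => (Finset.mem_filter.mp hA).2, ?_⟩
    rintro ⟨B, hB, hx⟩
    exact hB.2 (Finset.mem_filter.mpr ⟨hB.1, hx⟩)

lemma image_inj_aux {X : Type*} [DecidableEq X]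
    {U S T : Finset (Finset X)} {ρ : Finset X → Finset X}
    (hinj : Set.InjOn ρ ↑U) (hS : S ⊆ U) (hT : T ⊆ U)
    (h : S.image ρ ⊆ T.image ρ) : S ⊆ T := by
  intro A hA
  have : ρ A ∈ T.image ρ := h (Finset.mem_image_of_mem ρ hA)
  obtain ⟨B, hB, hBA⟩ := Finset.mem_image.mp this
  have : B = A := hinj (by exact_mod_cast hT hB) (by exact_mod_cast hS hA) hBA
  rwa [← this]

lemma image_inj {X : Type*} [DecidableEq X]
    {U S T : Finset (Finset X)} {ρ : Finset X → Finset X}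
    (hinj : Set.InjOn ρ ↑U) (hS : S ⊆ U) (hT : T ⊆ U)
    (h : S.image ρ = T.image ρ) : S = T :=
  Finset.Subset.antisymm (image_inj_aux hinj hS hT h.le)
    (image_inj_aux hinj hT hS h.ge)

lemma image_subset_of_mapsTo {X : Type*} [DecidableEq X]
    {U S : Finset (Finset X)} {ρ : Finset X → Finset X}
    (hm : Set.MapsTo ρ ↑U ↑U) (hS : S ⊆ U) : S.image ρ ⊆ U := by
  intro A hA
  obtain ⟨B, hB, rfl⟩ := Finset.mem_image.mp hA
  exact_mod_cast hm (by exact_mod_cast hS hB)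

/-- If `σ` transforms types by `ρ`, it maps cells to cells. -/
lemma vennCell_image {X : Type*} [Fintype X] [DecidableEq X]
    {U : Finset (Finset X)} {ρ : Finset X → Finset X}
    (hρ : Set.BijOn ρ ↑U ↑U) (σ : Equiv.Perm X)
    (hτ : ∀ x : X, (U.filter (fun A => σ x ∈ A)) = (U.filter (fun A => x ∈ A)).image ρ)
    {U₁ : Finset (Finset X)} (hU₁ : U₁ ⊆ U) :
    vennCell U (U₁.image ρ) = (vennCell U U₁).image σ := by
  have hU₁' : U₁.image ρ ⊆ U := image_subset_of_mapsTo hρ.mapsTo hU₁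
  ext y
  obtain ⟨x, rfl⟩ := σ.surjective y
  rw [mem_vennCell_iff hU₁', Finset.mem_image]
  constructor
  · intro h
    refine ⟨x, ?_, rfl⟩
    rw [mem_vennCell_iff hU₁]
    apply image_inj hρ.injOn (Finset.filter_subset _ _) hU₁
    rw [← hτ x, h]
  · rintro ⟨z, hz, hzx⟩
    cases σ.injective hzx
    rw [mem_vennCell_iff hU₁] at hz
    rw [hτ x, hz]

theorem stmt0 {X : Type*} [Fintype X] [DecidableEq X]
    (U : Finset (Finset X)) (ρ : Finset X → Finset X)
    (hρ : Set.BijOn ρ ↑U ↑U) :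
    (∃ σ : Equiv.Perm X, ∀ B ∈ U, ρ B = B.image σ) ↔
      (∀ U₁ ⊆ U, U₁.Nonempty → vennCard U U₁ = vennCard U (U₁.image ρ)) := by
  constructor
  · rintro ⟨σ, hσ⟩ U₁ hU₁ _
    have hτ : ∀ x : X, (U.filter (fun A => σ x ∈ A))
        = (U.filter (fun A => x ∈ A)).image ρ := by
      intro x
      ext A
      simp only [Finset.mem_filter, Finset.mem_image]
      constructor
      · rintro ⟨hA, hx⟩
        obtain ⟨B, hB, rfl⟩ := hρ.surjOn (by exact_mod_cast hA)
        have hB' : B ∈ U := by exact_mod_cast hB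
        refine ⟨B, ⟨hB', ?_⟩, rfl⟩
        rw [hσ B hB'] at hx
        obtain ⟨z, hz, hzx⟩ := Finset.mem_image.mp hx
        rwa [← σ.injective hzx]
      · rintro ⟨B, ⟨hB, hx⟩, rfl⟩
        refine ⟨image_subset_of_mapsTo hρ.mapsTo (Finset.singleton_subset_iff.mpr hB)
          (Finset.mem_image_of_mem ρ (Finset.mem_singleton_self B)), ?_⟩
        rw [hσ B hB]
        exact Finset.mem_image_of_mem σ hx
    unfold vennCard
    rw [vennCell_image hρ σ hτ hU₁, Finset.card_image_of_injective _ σ.injective]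
  · intro h
    -- extend the hypothesis to the empty subfamily
    have hcard : ∀ U₁ ⊆ U, (vennCell U U₁).card = (vennCell U (U₁.image ρ)).card := by
      intro U₁ hU₁
      rcases U₁.eq_empty_or_nonempty with rfl | hne
      · simp
      · exact h U₁ hU₁ hne
    set τ : X → Finset (Finset X) := fun x => U.filter (fun A => x ∈ A) with hτdef
    have hτsub : ∀ x, τ x ⊆ U := fun x => Finset.filter_subset _ _
    have hxmem : ∀ x : X, x ∈ vennCell U (τ x) := fun x =>
      (mem_vennCell_iff (hτsub x) x).mpr rfl
    -- the piecewise-defined map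
    classical
    set F : Finset (Finset X) → X → X := fun V x =>
      if hx : V ⊆ U ∧ x ∈ vennCell U V then
        ((Finset.equivOfCardEq (hcard V hx.1)) ⟨x, hx.2⟩ : X)
      else x with hFdef
    set f : X → X := fun x => F (τ x) x with hfdef
    have hfmem : ∀ x : X, f x ∈ vennCell U ((τ x).image ρ) := by
      intro x
      have hx : τ x ⊆ U ∧ x ∈ vennCell U (τ x) := ⟨hτsub x, hxmem x⟩
      simp only [hfdef, hFdef, dif_pos hx]
      exact ((Finset.equivOfCardEq (hcard (τ x) hx.1)) ⟨x, hx.2⟩).2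
    have hτf : ∀ x : X, τ (f x) = (τ x).image ρ := fun x =>
      (mem_vennCell_iff (image_subset_of_mapsTo hρ.mapsTo (hτsub x)) (f x)).mp (hfmem x)
    have hFinj : ∀ (V : Finset (Finset X)) (a b : X), V ⊆ U → a ∈ vennCell U V →
        b ∈ vennCell U V → F V a = F V b → a = b := by
      intro V a b hVU ha hb hab
      have hA : V ⊆ U ∧ a ∈ vennCell U V := ⟨hVU, ha⟩
      have hB : V ⊆ U ∧ b ∈ vennCell U V := ⟨hVU, hb⟩
      simp only [hFdef, dif_pos hA, dif_pos hB] at hab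
      have := (Finset.equivOfCardEq (hcard V hVU)).injective (Subtype.ext hab)
      exact congrArg Subtype.val this
    have hfinj : Function.Injective f := by
      intro x y hxy
      have hV : τ x = τ y := by
        apply image_inj hρ.injOn (hτsub x) (hτsub y)
        rw [← hτf x, ← hτf y, hxy]
      have h1 : f x = F (τ x) x := rfl
      have h2 : f y = F (τ x) y := by rw [hV]
      exact hFinj (τ x) x y (hτsub x) (hxmem x) (hV ▸ hxmem y)
        (by rw [← h1, ← h2, hxy])
    have hfbij : Function.Bijective f := Finite.injective_iff_bijective.mp hfinj
    refine ⟨Equiv.ofBijective f hfbij, ?_⟩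
    intro B hB
    have hσx : ∀ x : X, (Equiv.ofBijective f hfbij) x = f x := fun _ => rfl
    ext y
    obtain ⟨x, rfl⟩ := hfbij.surjective y
    have hρB : ρ B ∈ U := image_subset_of_mapsTo hρ.mapsTo
      (Finset.singleton_subset_iff.mpr hB)
      (Finset.mem_image_of_mem ρ (Finset.mem_singleton_self B))
    have key : f x ∈ ρ B ↔ x ∈ B := by
      have h1 : f x ∈ ρ B ↔ ρ B ∈ τ (f x) := by
        simp only [hτdef, Finset.mem_filter]
        exact ⟨fun h => ⟨hρB, h⟩, fun h => h.2⟩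
      rw [h1, hτf x]
      constructor
      · intro hmem
        obtain ⟨A, hA, hAB⟩ := Finset.mem_image.mp hmem
        have hA' : A ∈ U ∧ x ∈ A := Finset.mem_filter.mp hA
        have : A = B := hρ.injOn (by exact_mod_cast hA'.1) (by exact_mod_cast hB) hAB
        exact this ▸ hA'.2
      · intro hxB
        exact Finset.mem_image_of_mem ρ (Finset.mem_filter.mpr ⟨hB, hxB⟩)
    rw [key]
    constructor
    · intro hxB
      exact Finset.mem_image_of_mem _ hxB
    · intro hmem
      obtain ⟨z, hz, hzx⟩ := Finset.mem_image.mp hmem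
      rw [hσx z] at hzx
      cases hfinj hzx
      exact hz
end

section
/- Let X be a finite set, U a finite family of distinct subsets of X, ρ : U → U a bijection, U₂ ⊆ U a subfamily, and A₁, A₂ ∈ U₂ distinct sets with A₁ ⊆ A₂ and ρ(A₁) ⊆ ρ(A₂). If each of the three subfamilies U₂∖{A₂}, U₂∖{A₁}, and U₂∖{A₁,A₂} is Venn-good with ρ, then U₂ itself is Venn-good with ρ. -/
/-- A subfamily `U'` is Venn-good with `ρ` if `ℓ_{U',U₁} = ℓ_{ρ(U'),ρ(U₁)}` for all
nonempty `U₁ ⊆ U'`. -/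
def VennGood {X : Type*} [Fintype X] [DecidableEq X]
    (ρ : Finset X → Finset X) (U' : Finset (Finset X)) : Prop :=
  ∀ U₁ ⊆ U', U₁.Nonempty → vennCard U' U₁ = vennCard (U'.image ρ) (U₁.image ρ)

lemma mem_vennCell {X : Type*} [Fintype X] [DecidableEq X]
    {U U₁ : Finset (Finset X)} {x : X} :
    x ∈ vennCell U U₁ ↔ (∀ A ∈ U₁, x ∈ A) ∧ ∀ B ∈ U, B ∉ U₁ → x ∉ B := by
  simp [vennCell, Finset.mem_inf, Finset.mem_sup]

lemma vennCell_zero {X : Type*} [Fintype X] [DecidableEq X]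
    {U U₁ : Finset (Finset X)} {A B : Finset X}
    (hA : A ∈ U₁) (hB : B ∈ U) (hBn : B ∉ U₁) (hAB : A ⊆ B) :
    vennCell U U₁ = ∅ := by
  ext x
  simp only [Finset.notMem_empty, iff_false, mem_vennCell, not_and]
  intro h hn
  exact hn B hB hBn (hAB (h A hA))

lemma venn_merge {X : Type*} [Fintype X] [DecidableEq X]
    {U U₁ : Finset (Finset X)} {B : Finset X} (hB : B ∈ U) (hBn : B ∉ U₁) :
    vennCard (U.erase B) U₁ = vennCard U U₁ + vennCard U (insert B U₁) := by
  classical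
  have hdisj : Disjoint (vennCell U U₁) (vennCell U (insert B U₁)) := by
    rw [Finset.disjoint_left]
    intro x hx hx'
    rw [mem_vennCell] at hx hx'
    exact hx.2 B hB hBn (hx'.1 B (Finset.mem_insert_self B U₁))
  have hunion : vennCell (U.erase B) U₁ = vennCell U U₁ ∪ vennCell U (insert B U₁) := by
    ext x
    simp only [Finset.mem_union, mem_vennCell, Finset.mem_erase, Finset.mem_insert]
    constructor
    · rintro ⟨h1, h2⟩
      by_cases hxB : x ∈ B
      · exact Or.inr ⟨by rintro A (rfl | hA); exact hxB; exact h1 A hA,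
          fun C hC hCn => h2 C ⟨fun h => hCn (Or.inl h), hC⟩ (fun h => hCn (Or.inr h))⟩
      · exact Or.inl ⟨h1, fun C hC hCn => by
          rcases eq_or_ne C B with rfl | hCB
          · exact hxB
          · exact h2 C ⟨hCB, hC⟩ hCn⟩
    · rintro (⟨h1, h2⟩ | ⟨h1, h2⟩)
      · exact ⟨h1, fun C hC hCn => h2 C hC.2 hCn⟩
      · exact ⟨fun A hA => h1 A (Or.inr hA), fun C hC hCn => by
          rcases eq_or_ne C B with rfl | hCB
          · exact h2 C hB (by tauto)
          · exact h2 C hC.2 (by tauto)⟩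
  rw [vennCard, vennCard, vennCard, hunion, Finset.card_union_of_disjoint hdisj]

lemma venn_redundant {X : Type*} [Fintype X] [DecidableEq X]
    {U U₁ : Finset (Finset X)} {A B : Finset X}
    (hA : A ∈ U₁) (hB : B ∈ U₁) (hAB : A ⊆ B) (hne : A ≠ B) :
    vennCell U U₁ = vennCell (U.erase B) (U₁.erase B) := by
  ext x
  simp only [mem_vennCell, Finset.mem_erase]
  constructor
  · rintro ⟨h1, h2⟩
    exact ⟨fun C hC => h1 C hC.2, fun C hC hCn => h2 C hC.2 (fun h => hCn ⟨hC.1, h⟩)⟩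
  · rintro ⟨h1, h2⟩
    refine ⟨fun C hC => ?_, fun C hC hCn => ?_⟩
    · rcases eq_or_ne C B with rfl | hCB
      · exact hAB (h1 A ⟨hne, hA⟩)
      · exact h1 C ⟨hCB, hC⟩
    · rcases eq_or_ne C B with rfl | hCB
      · exact absurd hB hCn
      · exact h2 C ⟨hCB, hC⟩ (fun h => hCn h.2)

lemma image_erase_of_injOn {α β : Type*} [DecidableEq α] [DecidableEq β]
    {f : α → β} {s : Finset α} (h : Set.InjOn f ↑s) {a : α} (ha : a ∈ s) :
    (s.erase a).image f = (s.image f).erase (f a) := by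
  ext y
  simp only [Finset.mem_image, Finset.mem_erase]
  constructor
  · rintro ⟨x, ⟨hxa, hxs⟩, rfl⟩
    exact ⟨fun h' => hxa (h hxs ha h'), x, hxs, rfl⟩
  · rintro ⟨hy, x, hxs, rfl⟩
    exact ⟨x, ⟨fun h' => hy (by rw [h']), hxs⟩, rfl⟩

theorem stmt5 {X : Type*} [Fintype X] [DecidableEq X]
    (U : Finset (Finset X)) (ρ : Finset X → Finset X)
    (hρ : Set.BijOn ρ ↑U ↑U) (U₂ : Finset (Finset X)) (hU₂ : U₂ ⊆ U)
    (A₁ A₂ : Finset X) (hA₁ : A₁ ∈ U₂) (hA₂ : A₂ ∈ U₂) (hne : A₁ ≠ A₂)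
    (hsub : A₁ ⊆ A₂) (hρsub : ρ A₁ ⊆ ρ A₂)
    (h1 : VennGood ρ (U₂.erase A₂)) (h2 : VennGood ρ (U₂.erase A₁))
    (h3 : VennGood ρ (U₂ \ {A₁, A₂})) :
    VennGood ρ U₂ := by
  classical
  have hinj : Set.InjOn ρ ↑U₂ := hρ.injOn.mono (by exact_mod_cast hU₂)
  have hρne : ρ A₁ ≠ ρ A₂ := fun h => hne (hinj hA₁ hA₂ h)
  -- membership transfer
  have hmem : ∀ {V : Finset (Finset X)}, V ⊆ U₂ → ∀ {C : Finset X}, C ∈ U₂ →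
      (ρ C ∈ V.image ρ ↔ C ∈ V) := by
    intro V hV C hC
    constructor
    · rintro h
      rcases Finset.mem_image.1 h with ⟨D, hD, hDC⟩
      rwa [← hinj (hV hD) hC hDC]
    · exact fun h => Finset.mem_image_of_mem ρ h
  -- Case both in: key3
  have key3 : ∀ V ⊆ U₂, A₁ ∈ V → A₂ ∈ V →
      vennCard U₂ V = vennCard (U₂.image ρ) (V.image ρ) := by
    intro V hV h₁ h₂
    have hVinj : Set.InjOn ρ ↑V := hinj.mono (by exact_mod_cast hV)
    have e1 : vennCell U₂ V = vennCell (U₂.erase A₂) (V.erase A₂) :=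
      venn_redundant h₁ h₂ hsub hne
    have e2 : vennCell (U₂.image ρ) (V.image ρ)
        = vennCell ((U₂.image ρ).erase (ρ A₂)) ((V.image ρ).erase (ρ A₂)) :=
      venn_redundant (Finset.mem_image_of_mem ρ h₁) (Finset.mem_image_of_mem ρ h₂)
        hρsub hρne
    have h1' := h1 (V.erase A₂) (Finset.erase_subset_erase _ hV)
      ⟨A₁, Finset.mem_erase.2 ⟨hne, h₁⟩⟩
    rw [image_erase_of_injOn hinj hA₂, image_erase_of_injOn hVinj h₂] at h1'
    unfold vennCard
    rw [e1, e2]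
    exact h1'
  intro U₁ hU₁ hU₁ne
  by_cases hm2 : A₂ ∈ U₁ <;> by_cases hm1 : A₁ ∈ U₁
  · -- both in
    exact key3 U₁ hU₁ hm1 hm2
  · -- A₂ ∈ U₁, A₁ ∉ U₁ : case 4
    have hρm1 : ρ A₁ ∉ U₁.image ρ := fun h => hm1 ((hmem hU₁ hA₁).1 h)
    have m := venn_merge (U := U₂) hA₁ hm1
    have m' := venn_merge (U := U₂.image ρ) (Finset.mem_image_of_mem ρ hA₁) hρm1
    have hsum := h2 U₁ (Finset.subset_erase.2 ⟨hU₁, hm1⟩) hU₁ne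
    rw [image_erase_of_injOn hinj hA₁] at hsum
    have hk := key3 (insert A₁ U₁) (Finset.insert_subset hA₁ hU₁)
      (Finset.mem_insert_self _ _) (Finset.mem_insert_of_mem hm2)
    rw [Finset.image_insert] at hk
    omega
  · -- A₁ ∈ U₁, A₂ ∉ U₁ : both zero
    have hρm2 : ρ A₂ ∉ U₁.image ρ := fun h => hm2 ((hmem hU₁ hA₂).1 h)
    unfold vennCard
    rw [vennCell_zero hm1 hA₂ hm2 hsub,
      vennCell_zero (Finset.mem_image_of_mem ρ hm1) (Finset.mem_image_of_mem ρ hA₂)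
        hρm2 hρsub]
  · -- both out : case 2
    have hρm1 : ρ A₁ ∉ U₁.image ρ := fun h => hm1 ((hmem hU₁ hA₁).1 h)
    have hρm2 : ρ A₂ ∉ U₁.image ρ := fun h => hm2 ((hmem hU₁ hA₂).1 h)
    have m := venn_merge (U := U₂) hA₁ hm1
    have m' := venn_merge (U := U₂.image ρ) (Finset.mem_image_of_mem ρ hA₁) hρm1
    have z : vennCard U₂ (insert A₁ U₁) = 0 := by
      unfold vennCard
      rw [vennCell_zero (Finset.mem_insert_self A₁ U₁) hA₂
        (by simp [hm2, hne.symm]) hsub]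
      rfl
    have z' : vennCard (U₂.image ρ) (insert (ρ A₁) (U₁.image ρ)) = 0 := by
      unfold vennCard
      rw [vennCell_zero (Finset.mem_insert_self _ _) (Finset.mem_image_of_mem ρ hA₂)
        (by simp [hρm2, hρne.symm]) hρsub]
      rfl
    have hsum := h2 U₁ (Finset.subset_erase.2 ⟨hU₁, hm1⟩) hU₁ne
    rw [image_erase_of_injOn hinj hA₁] at hsum
    omega
end

section
/- Let X be a finite set with |X| = n ≥ 1 and let U be a finite family of distinct nonempty subsets of X such that every antichain (under set inclusion) contained in U has at most a members, where a ≥ 1. Then the group of all bijections τ : U → U satisfying |τ(B)| = |B| for every B ∈ U (the cardinality-preserving permutations of U) has order at most (a!)^n. -/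
/-!
A permutation of `U` preserving cardinalities is the same as a family of permutations of the
slices `U.slice k`. Each slice is an antichain, hence has at most `a` members, and since the
members of `U` are nonempty subsets of `X`, only the `n` slices with `1 ≤ k ≤ n` are inhabited.
-/

open Equiv Finset Nat

theorem Equiv.Perm.card_comp_eq_le_factorial_pow {α ι : Type*} [Fintype α] (f : α → ι)
    {a m : ℕ} (hfiber : ∀ i, Nat.card {x // f x = i} ≤ a)
    (hrange : (Set.range f).ncard ≤ m) :
    Nat.card {g : Perm α // f ∘ g = f} ≤ a ! ^ m := by
  classical
  have hrange' : (univ.image f).card ≤ m := by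
    rwa [← Set.ncard_coe_finset, coe_image, coe_univ, Set.image_univ]
  rw [Nat.card_eq_fintype_card, DomMulAct.stabilizer_card']
  calc ∏ i ∈ univ.image f, (Fintype.card {x // f x = i})!
      ≤ ∏ _i ∈ univ.image f, a ! := by
        gcongr with i
        exact Fintype.card_eq_nat_card ▸ hfiber i
    _ = a ! ^ (univ.image f).card := prod_const _
    _ ≤ a ! ^ m := Nat.pow_le_pow_right (factorial_pos a) hrange'

theorem Finset.card_slice_le_of_forall_isAntichain {X : Type*} {U : Finset (Finset X)} {a : ℕ}
    (hantichain : ∀ D ⊆ U, IsAntichain (· ⊆ ·) (↑D : Set (Finset X)) → D.card ≤ a) (k : ℕ) :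
    (U.slice k).card ≤ a :=
  hantichain _ slice_subset sized_slice.isAntichain

theorem Finset.ncard_range_card_le_card {X : Type*} [Fintype X] {U : Finset (Finset X)}
    (hnonempty : ∀ B ∈ U, B.Nonempty) :
    (Set.range fun B : {A // A ∈ U} => (B : Finset X).card).ncard ≤ Fintype.card X := by
  calc _ ≤ (Set.Icc 1 (Fintype.card X)).ncard := by
        refine Set.ncard_le_ncard ?_ (Set.finite_Icc _ _)
        rintro _ ⟨B, rfl⟩
        exact ⟨(hnonempty B B.2).card_pos, card_le_univ _⟩
    _ = Fintype.card X := by simp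

theorem stmt11_general {X : Type*} [Fintype X] [DecidableEq X] (n a : ℕ)
    (hn : Fintype.card X = n)
    (U : Finset (Finset X)) (hnonempty : ∀ B ∈ U, B.Nonempty)
    (hantichain : ∀ D ⊆ U, IsAntichain (· ⊆ ·) (↑D : Set (Finset X)) → D.card ≤ a) :
    Nat.card {τ : Equiv.Perm {A // A ∈ U} //
        ∀ B : {A // A ∈ U}, ((τ B : Finset X)).card = (B : Finset X).card} ≤
      a.factorial ^ n := by
  set card : {A // A ∈ U} → ℕ := fun B => (B : Finset X).card
  have hfiber (k : ℕ) : Nat.card {B // card B = k} ≤ a := by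
    calc Nat.card {B // card B = k} ≤ Nat.card (U.slice k) :=
          Nat.card_le_card_of_injective (fun B => ⟨B.1, mem_slice.2 ⟨B.1.2, B.2⟩⟩)
            fun _ _ h => Subtype.ext (Subtype.ext (Subtype.mk.inj h))
      _ ≤ a := by simpa using card_slice_le_of_forall_isAntichain hantichain k
  rw [Nat.card_congr (Equiv.subtypeEquivRight fun τ => funext_iff.symm)]
  exact Perm.card_comp_eq_le_factorial_pow card hfiber (hn ▸ ncard_range_card_le_card hnonempty)

theorem stmt11 {X : Type*} [Fintype X] [DecidableEq X] (n a : ℕ)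
    (hn : Fintype.card X = n) (hn1 : 1 ≤ n) (ha : 1 ≤ a)
    (U : Finset (Finset X)) (hnonempty : ∀ B ∈ U, B.Nonempty)
    (hantichain : ∀ D ⊆ U, IsAntichain (· ⊆ ·) (↑D : Set (Finset X)) → D.card ≤ a) :
    Nat.card {τ : Equiv.Perm {A // A ∈ U} //
        ∀ B : {A // A ∈ U}, ((τ B : Finset X)).card = (B : Finset X).card} ≤
      a.factorial ^ n :=
  stmt11_general n a hn U hnonempty hantichain
end
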